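/- arXiv:2412.13384 — 8 statements merged into one kernel-verified Lean document; each statement's English description precedes it below -/
import Mathlib

section
/- Let F(x,y) ∈ ℚ̄[x,y] be irreducible with deg_x F ≥ 2, defining the affine curve X : F(x,y) = 0. Suppose there exist a rational function A(y) ∈ ℚ̄(y) of degree at least two and a rational function R(x,y) over ℚ̄ such that for all but finitely many y₀ ∈ ℂ the map x ↦ R(x,y₀) restricts to a bijection from the y₀-fiber of X onto the A(y₀)-fiber of X. Then for every y₀ ∈ ℚ̄ there is a number field k such that for every n ≥ 0 for which the n-th iterate A^{∘n}(y₀) is defined, the A^{∘n}(y₀)-fiber of X is contained in k. -/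
/-- `ℚ̄`: the field of algebraic numbers, i.e. the algebraic closure of `ℚ` inside `ℂ`. -/
noncomputable abbrev Qbar : IntermediateField ℚ ℂ := algebraicClosure ℚ ℂ

/-- For `F ∈ ℚ̄[x,y]`, encoded as a polynomial in `x` whose coefficients are polynomials in `y`,
the value `F(x, y₀) ∈ ℂ` at `x, y₀ ∈ ℂ`. -/
noncomputable def fval (F : Polynomial (Polynomial ↥Qbar)) (x y₀ : ℂ) : ℂ :=
  Polynomial.eval₂
    ((Polynomial.evalRingHom y₀).comp (Polynomial.mapRingHom (algebraMap ↥Qbar ℂ))) x F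

/-- The `y₀`-fiber of the curve `X : F(x,y) = 0`: the set of complex roots of `F(x, y₀)`. -/
noncomputable def fiber (F : Polynomial (Polynomial ↥Qbar)) (y₀ : ℂ) : Set ℂ :=
  {x : ℂ | fval F x y₀ = 0}

/-- The degree of a rational function: the maximum of the degrees of its numerator and
denominator in lowest terms. -/
noncomputable def ratDeg {K : Type*} [Field K] (A : RatFunc K) : ℕ :=
  max A.num.natDegree A.denom.natDegree

/-- The value at `z ∈ ℂ` of a rational function `A ∈ ℚ̄(y)`. -/
noncomputable def evalA (A : RatFunc ↥Qbar) (z : ℂ) : ℂ :=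
  RatFunc.eval (algebraMap ↥Qbar ℂ) z A

/-- `A ∈ ℚ̄(y)` is defined at `z ∈ ℂ`, i.e. `z` is not a pole of `A`. -/
noncomputable def DefinedAt (A : RatFunc ↥Qbar) (z : ℂ) : Prop :=
  Polynomial.eval z (A.denom.map (algebraMap ↥Qbar ℂ)) ≠ 0

/-- The `n`-th iterate `A^{∘n}(y₀)` is defined. -/
noncomputable def IterDefined (A : RatFunc ↥Qbar) (y₀ : ℂ) (n : ℕ) : Prop :=
  ∀ m < n, DefinedAt A ((evalA A)^[m] y₀)

/-!
Off a finite set `E`, the fiber over `A(e)` is the image of the fiber over `e` under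
`x ↦ P(x, e) / Q(x, e)`. So if a field `k` contains `y₀`, the coefficients of `P`, `Q` and `A`,
the fiber over `y₀` and the fibers over the points `A(e)` with `e ∈ E ∩ ℚ̄`, then by induction
along the orbit it contains every fiber over `A^{∘n}(y₀)`. Such a `k` can be taken finite over `ℚ`:
all these sets are finite sets of algebraic numbers, the fibers because over `e ∈ ℚ̄` the
polynomial `F(x, e)` is nonzero, as otherwise `y - e` would be a proper factor of the irreducible
`F`.
-/

open Polynomial

theorem Polynomial.eval₂_mem {R S subS : Type*} [Semiring R] [CommSemiring S] [SetLike subS S]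
    [SubsemiringClass subS S] {f : R →+* S} {p : R[X]} {s : subS}
    (hs : ∀ n ∈ p.support, f (p.coeff n) ∈ s) {x : S} (hx : x ∈ s) : p.eval₂ f x ∈ s := by
  rw [eval₂_eq_sum]
  exact sum_mem fun n hn => mul_mem (hs n hn) (pow_mem hx n)

theorem Polynomial.map_evalRingHom_ne_zero {R : Type*} [CommRing R] [IsDomain R] {F : R[X][X]}
    (hF : Irreducible F) (hdeg : 0 < F.natDegree) (a : R) : F.map (evalRingHom a) ≠ 0 := by
  intro h
  obtain ⟨t, rfl⟩ : C (X - C a) ∣ F := (C_dvd_iff_dvd_coeff _ _).2 fun i =>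
    dvd_iff_isRoot.2 (by simpa using congrArg (coeff · i) h)
  rcases hF.isUnit_or_isUnit rfl with hu | hu
  · exact not_isUnit_X_sub_C a (isUnit_C.1 hu)
  · obtain ⟨r, -, rfl⟩ := isUnit_iff.1 hu
    rw [← C_mul, natDegree_C] at hdeg
    exact hdeg.false

theorem Function.iterate_mem_and_subset_of_surjOn {α : Type*} {s E : Set α} {T : α → α}
    {R : α → α → α} {fib : α → Set α} (hT : Set.MapsTo T s s) (hR : ∀ e ∈ s, Set.MapsTo (R · e) s s)
    (hsurj : ∀ e ∉ E, Set.SurjOn (R · e) (fib e) (fib (T e)))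
    (hE : ∀ e ∈ E, e ∈ s → fib (T e) ⊆ s) {y₀ : α} (hy₀ : y₀ ∈ s) (hfib : fib y₀ ⊆ s) (n : ℕ) :
    T^[n] y₀ ∈ s ∧ fib (T^[n] y₀) ⊆ s := by
  induction n with
  | zero => exact ⟨hy₀, hfib⟩
  | succ n ih =>
    obtain ⟨he, hfe⟩ := ih
    rw [Function.iterate_succ_apply']
    refine ⟨hT he, ?_⟩
    by_cases hmem : T^[n] y₀ ∈ E
    · exact hE _ hmem he
    · exact (hsurj _ hmem).trans ((hR _ he).mono_left hfe).image_subset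

section NumberField

variable {k : IntermediateField ℚ ℂ}

theorem coe_coeff_mem {p : Polynomial ↥Qbar} (hp : ∀ c ∈ p.coeffs, (c : ℂ) ∈ k) :
    ∀ n ∈ p.support, algebraMap ↥Qbar ℂ (p.coeff n) ∈ k :=
  fun _ hn => hp _ (coeff_mem_coeffs (mem_support_iff.1 hn))

theorem evalA_mem {A : RatFunc ↥Qbar} (hnum : ∀ c ∈ A.num.coeffs, (c : ℂ) ∈ k)
    (hdenom : ∀ c ∈ A.denom.coeffs, (c : ℂ) ∈ k) {z : ℂ} (hz : z ∈ k) : evalA A z ∈ k :=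
  div_mem (eval₂_mem (coe_coeff_mem hnum) hz) (eval₂_mem (coe_coeff_mem hdenom) hz)

theorem fval_mem {G : Polynomial (Polynomial ↥Qbar)}
    (hG : ∀ q ∈ G.coeffs, ∀ c ∈ q.coeffs, (c : ℂ) ∈ k) {x e : ℂ} (hx : x ∈ k) (he : e ∈ k) :
    fval G x e ∈ k := by
  refine eval₂_mem (fun n hn => ?_) hx
  simpa only [RingHom.comp_apply, coe_mapRingHom, coe_evalRingHom, eval_map] using
    eval₂_mem (coe_coeff_mem (hG _ (coeff_mem_coeffs (mem_support_iff.1 hn)))) he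

theorem evalA_mem_Qbar (A : RatFunc ↥Qbar) {z : ℂ} (hz : z ∈ Qbar) : evalA A z ∈ Qbar :=
  evalA_mem (fun c _ => c.2) (fun c _ => c.2) hz

end NumberField

section Fiber

variable {F : Polynomial (Polynomial ↥Qbar)}

theorem fval_coe (x : ℂ) (a : ↥Qbar) :
    fval F x a = aeval x (F.map (evalRingHom a)) := by
  rw [fval, aeval_def, eval₂_map]
  congr 1
  exact RingHom.ext fun p => (eval_map _ _).trans (eval₂_at_apply _ a)

theorem fiber_subset_rootSet (hF : Irreducible F) (hdeg : 0 < F.natDegree) (a : ↥Qbar) :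
    fiber F a ⊆ (F.map (evalRingHom a)).rootSet ℂ :=
  fun x hx => mem_rootSet.2 ⟨map_evalRingHom_ne_zero hF hdeg a, (fval_coe x a).symm.trans hx⟩

theorem fiber_finite (hF : Irreducible F) (hdeg : 0 < F.natDegree) (a : ↥Qbar) :
    (fiber F a).Finite :=
  (rootSet_finite _ ℂ).subset (fiber_subset_rootSet hF hdeg a)

theorem fiber_subset_Qbar (hF : Irreducible F) (hdeg : 0 < F.natDegree) (a : ↥Qbar) :
    fiber F a ⊆ Qbar := by
  have : Algebra.IsIntegral ℚ ↥Qbar := (algebraicClosure.isAlgebraic ℚ ℂ).isIntegral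
  exact fun x hx => mem_algebraicClosure_iff'.2 <|
    isIntegral_trans x (isAlgebraic_of_mem_rootSet (fiber_subset_rootSet hF hdeg a hx)).isIntegral

theorem biUnion_fiber_finite_subset_Qbar (hF : Irreducible F) (hdeg : 0 < F.natDegree)
    {T : Set ℂ} (hT : T.Finite) (hTQbar : T ⊆ Qbar) :
    (⋃ e ∈ T, fiber F e).Finite ∧ (⋃ e ∈ T, fiber F e) ⊆ Qbar :=
  ⟨hT.biUnion fun e he => fiber_finite hF hdeg ⟨e, hTQbar he⟩,
    Set.iUnion₂_subset fun e he => fiber_subset_Qbar hF hdeg ⟨e, hTQbar he⟩⟩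

end Fiber

theorem fiber_iterate_subset {k : IntermediateField ℚ ℂ} (hk : k ≤ Qbar)
    {F P Q : Polynomial (Polynomial ↥Qbar)} {A : RatFunc ↥Qbar}
    (hP : ∀ q ∈ P.coeffs, ∀ c ∈ q.coeffs, (c : ℂ) ∈ k)
    (hQ : ∀ q ∈ Q.coeffs, ∀ c ∈ q.coeffs, (c : ℂ) ∈ k)
    (hnum : ∀ c ∈ A.num.coeffs, (c : ℂ) ∈ k) (hdenom : ∀ c ∈ A.denom.coeffs, (c : ℂ) ∈ k)
    {E : Set ℂ} (hsurj : ∀ e ∉ E, Set.SurjOn (fun x => fval P x e / fval Q x e) (fiber F e)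
      (fiber F (evalA A e)))
    {y₀ : ℂ} (hy₀ : y₀ ∈ k) (hfib : ∀ e ∈ insert y₀ (evalA A '' (E ∩ Qbar)), fiber F e ⊆ k)
    (n : ℕ) : fiber F ((evalA A)^[n] y₀) ⊆ k :=
  (Function.iterate_mem_and_subset_of_surjOn (fun _ hz => evalA_mem hnum hdenom hz)
    (fun _ he _ hx => div_mem (fval_mem hP hx he) (fval_mem hQ hx he)) hsurj
    (fun e he hek => hfib _ (Set.mem_insert_of_mem _ ⟨e, ⟨he, hk hek⟩, rfl⟩)) hy₀
    (hfib _ (Set.mem_insert _ _)) n).2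

theorem stmt2_general (F : Polynomial (Polynomial ↥Qbar)) (hirr : Irreducible F)
    (hdeg : 2 ≤ F.natDegree) (A : RatFunc ↥Qbar) (P Q : Polynomial (Polynomial ↥Qbar))
    (hbij : ∃ E : Set ℂ, E.Finite ∧ ∀ y₀ : ℂ, y₀ ∉ E →
      (∀ x ∈ fiber F y₀, fval Q x y₀ ≠ 0) ∧
      Set.BijOn (fun x : ℂ => fval P x y₀ / fval Q x y₀) (fiber F y₀)
        (fiber F (evalA A y₀))) :
    ∀ y₀ : ℂ, y₀ ∈ Qbar →
      ∃ k : IntermediateField ℚ ℂ, FiniteDimensional ℚ ↥k ∧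
        ∀ n : ℕ, IterDefined A y₀ n → fiber F ((evalA A)^[n] y₀) ⊆ (k : Set ℂ) := by
  obtain ⟨E, hEfin, hE⟩ := hbij
  intro y₀ hy₀
  let T : Set ℂ := insert y₀ (evalA A '' (E ∩ Qbar))
  obtain ⟨hBfin, hBQbar⟩ := biUnion_fiber_finite_subset_Qbar hirr (by omega)
    (((hEfin.inter_of_left _).image _).insert y₀)
    (Set.insert_subset hy₀ (Set.image_subset_iff.2 fun e he => evalA_mem_Qbar A he.2))
  let C : Finset ↥Qbar :=
    P.coeffs.biUnion coeffs ∪ Q.coeffs.biUnion coeffs ∪ A.num.coeffs ∪ A.denom.coeffs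
  let S : Set ℂ := insert y₀ (((↑) : ↥Qbar → ℂ) '' C) ∪ ⋃ e ∈ T, fiber F e
  have hSQbar : S ⊆ Qbar :=
    Set.union_subset (Set.insert_subset hy₀ (Set.image_subset_iff.2 fun c _ => c.2)) hBQbar
  have : Finite S := (((C.finite_toSet.image _).insert y₀).union hBfin).to_subtype
  let k := IntermediateField.adjoin ℚ S
  have hCk : ∀ c ∈ C, (c : ℂ) ∈ k := fun c hc =>
    IntermediateField.subset_adjoin ℚ S (Or.inl (Or.inr ⟨c, hc, rfl⟩))
  refine ⟨k, IntermediateField.finiteDimensional_adjoin fun x hx =>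
    mem_algebraicClosure_iff'.1 (hSQbar hx), fun n _ => ?_⟩
  exact fiber_iterate_subset (IntermediateField.adjoin_le_iff.2 hSQbar)
    (fun q hq c hc => hCk c (by simpa [C] using Or.inl ⟨q, hq, hc⟩))
    (fun q hq c hc => hCk c (by simpa [C] using Or.inr (Or.inl ⟨q, hq, hc⟩)))
    (fun c hc => hCk c (by simp [C, hc])) (fun c hc => hCk c (by simp [C, hc]))
    (fun e he => (hE e he).2.surjOn)
    (IntermediateField.subset_adjoin ℚ S (Or.inl (Set.mem_insert _ _)))
    (fun e he x hx => IntermediateField.subset_adjoin ℚ S (Or.inr (Set.mem_biUnion he hx))) n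

theorem stmt2 (F : Polynomial (Polynomial ↥Qbar)) (hirr : Irreducible F)
    (hdeg : 2 ≤ F.natDegree) (A : RatFunc ↥Qbar) (P Q : Polynomial (Polynomial ↥Qbar))
    (hA : 2 ≤ ratDeg A) (hQ : Q ≠ 0)
    (hbij : ∃ E : Set ℂ, E.Finite ∧ ∀ y₀ : ℂ, y₀ ∉ E →
      (∀ x ∈ fiber F y₀, fval Q x y₀ ≠ 0) ∧
      Set.BijOn (fun x : ℂ => fval P x y₀ / fval Q x y₀) (fiber F y₀)
        (fiber F (evalA A y₀))) :
    ∀ y₀ : ℂ, y₀ ∈ Qbar →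
      ∃ k : IntermediateField ℚ ℂ, FiniteDimensional ℚ ↥k ∧
        ∀ n : ℕ, IterDefined A y₀ n → fiber F ((evalA A)^[n] y₀) ⊆ (k : Set ℂ) :=
  stmt2_general F hirr hdeg A P Q hbij
end

section
/- Let A, B, V be nonconstant rational functions in ℂ(z) such that A ∘ V = V ∘ B, and suppose that the compositum of the subfields ℂ(V) and ℂ(B) of ℂ(z) equals ℂ(z). Then for all but finitely many z₀ ∈ ℂ, the map B restricts to a bijection from the set {z ∈ ℂ : V(z) = z₀} onto the set {z ∈ ℂ : V(z) = A(z₀)}. -/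
open Polynomial

/-- A rational function is nonconstant iff its numerator or denominator (in lowest terms)
has positive degree. -/
def Nonconstant (f : RatFunc ℂ) : Prop :=
  0 < max f.num.natDegree f.denom.natDegree

/-- Composition `p ∘ q` of rational functions, obtained by substituting `q` into `p`. -/
noncomputable def rcomp (p q : RatFunc ℂ) : RatFunc ℂ :=
  RatFunc.eval (algebraMap ℂ (RatFunc ℂ)) q p

/-- The fiber `{z ∈ ℂ : V(z) = c}`: complex numbers that are not poles of `V` and where `V`
takes the value `c`. -/
noncomputable def rfiber (V : RatFunc ℂ) (c : ℂ) : Set ℂ :=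
  {z : ℂ | Polynomial.eval z V.denom ≠ 0 ∧ RatFunc.eval (RingHom.id ℂ) z V = c}

/-! ### Basic facts -/

lemma nonconst_transcendental {f : RatFunc ℂ} (hf : Nonconstant f) : Transcendental ℂ f := by
  intro halg
  have hint : IsIntegral ℂ f := halg.isIntegral
  have hdeg : (minpoly ℂ f).degree = 1 :=
    IsAlgClosed.degree_eq_one_of_irreducible ℂ (minpoly.irreducible hint)
  obtain ⟨c, hc⟩ := minpoly.degree_eq_one_iff.mp hdeg
  rw [RatFunc.algebraMap_eq_C] at hc
  have h1 : f.num = Polynomial.C c := by rw [← hc, RatFunc.num_C]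
  have h2 : f.denom = 1 := by rw [← hc, RatFunc.denom_C]
  unfold Nonconstant at hf
  rw [h1, h2] at hf
  simp at hf

lemma aeval_ne_zero_of_nonconst {f : RatFunc ℂ} (hf : Nonconstant f) {p : ℂ[X]} (hp : p ≠ 0) :
    Polynomial.aeval f p ≠ 0 := fun h =>
  nonconst_transcendental hf ⟨p, hp, h⟩

lemma no_common_root (V : RatFunc ℂ) {z : ℂ} (h1 : V.num.eval z = 0) (h2 : V.denom.eval z = 0) :
    False := by
  obtain ⟨a, b, hab⟩ := V.isCoprime_num_denom
  have := congrArg (Polynomial.eval z) hab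
  simp [h1, h2] at this

lemma num_ne_zero_of_nonconst {V : RatFunc ℂ} (hV : Nonconstant V) : V.num ≠ 0 := by
  intro h
  have : V = 0 := RatFunc.num_eq_zero_iff.mp h
  unfold Nonconstant at hV
  rw [this] at hV
  simp at hV

lemma ratfunc_eval_eq (V : RatFunc ℂ) (z : ℂ) :
    RatFunc.eval (RingHom.id ℂ) z V = V.num.eval z / V.denom.eval z := rfl

lemma rfiber_eq (V : RatFunc ℂ) (c : ℂ) :
    rfiber V c = {z : ℂ | (V.num - Polynomial.C c * V.denom).eval z = 0} := by
  ext z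
  simp only [rfiber, Set.mem_setOf_eq, ratfunc_eval_eq, eval_sub, eval_mul, eval_C]
  constructor
  · rintro ⟨h1, h2⟩
    rw [div_eq_iff h1] at h2
    rw [h2]; ring
  · intro h
    have hz : V.num.eval z = c * V.denom.eval z := by linear_combination h
    have h1 : V.denom.eval z ≠ 0 := by
      intro h0
      exact no_common_root V (by rw [hz, h0, mul_zero]) h0
    exact ⟨h1, by rw [hz]; field_simp⟩

lemma fiberpoly_ne_zero {V : RatFunc ℂ} (hV : Nonconstant V) (c : ℂ) :
    V.num - Polynomial.C c * V.denom ≠ 0 := by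
  intro h
  have h' : V.num = Polynomial.C c * V.denom := by linear_combination h
  have hdvd : V.denom ∣ V.num := Dvd.intro_left _ h'.symm
  have hu : IsUnit V.denom := (V.isCoprime_num_denom.symm).isUnit_of_dvd' dvd_rfl hdvd
  have hd : V.denom.natDegree = 0 := Polynomial.natDegree_eq_zero_of_isUnit hu
  have hn : V.num.natDegree = 0 := by
    rw [h']
    refine le_antisymm (le_trans (Polynomial.natDegree_mul_le) ?_) (Nat.zero_le _)
    simp [hd]
  unfold Nonconstant at hV
  omega

lemma rfiber_finite {V : RatFunc ℂ} (hV : Nonconstant V) (c : ℂ) : (rfiber V c).Finite := by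
  rw [rfiber_eq]
  exact Polynomial.finite_setOf_isRoot (fiberpoly_ne_zero hV c)

/-! ### Counting fibers -/

lemma wronskian_ne_zero {V : RatFunc ℂ} (hV : Nonconstant V) :
    V.num.derivative * V.denom - V.num * V.denom.derivative ≠ 0 := by
  intro h
  have h' : V.num.derivative * V.denom = V.num * V.denom.derivative := by linear_combination h
  by_cases hd : V.denom.natDegree = 0
  · have hd1 : V.denom = 1 := Polynomial.eq_one_of_monic_natDegree_zero V.monic_denom hd
    rw [hd1] at h'
    simp only [derivative_one, mul_zero, mul_one] at h'
    have : V.num.natDegree = 0 := Polynomial.natDegree_eq_zero_of_derivative_eq_zero h'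
    unfold Nonconstant at hV; omega
  · have hdvd : V.denom ∣ V.denom.derivative := by
      have hh : V.denom ∣ V.num * V.denom.derivative :=
        ⟨V.num.derivative, by linear_combination -h'⟩
      exact (V.isCoprime_num_denom.symm).dvd_of_dvd_mul_left hh
    have hne : V.denom.derivative ≠ 0 := by
      intro h0
      exact hd (Polynomial.natDegree_eq_zero_of_derivative_eq_zero h0)
    have h1 := Polynomial.natDegree_le_of_dvd hdvd hne
    have h2 := Polynomial.natDegree_derivative_lt hd
    omega

lemma exists_common_root_of_not_coprime {p q : ℂ[X]} (hp : p ≠ 0) (h : ¬ IsCoprime p q) :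
    ∃ z, p.eval z = 0 ∧ q.eval z = 0 := by
  classical
  rw [← EuclideanDomain.gcd_isUnit_iff] at h
  have hdeg : (EuclideanDomain.gcd p q).degree ≠ 0 := fun hdeg =>
    h (Polynomial.isUnit_iff_degree_eq_zero.mpr hdeg)
  obtain ⟨z, hz⟩ := IsAlgClosed.exists_root _ hdeg
  exact ⟨z, hz.dvd (EuclideanDomain.gcd_dvd_left p q),
    hz.dvd (EuclideanDomain.gcd_dvd_right p q)⟩

lemma roots_set_eq {p : ℂ[X]} (hp : p ≠ 0) :
    {z : ℂ | p.eval z = 0} = ↑p.roots.toFinset := by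
  ext z
  simp [Polynomial.mem_roots hp, Polynomial.IsRoot]

lemma card_fiber {V : RatFunc ℂ} (hV : Nonconstant V) :
    ∃ EV : Set ℂ, EV.Finite ∧ ∀ c ∉ EV,
      (rfiber V c).ncard = max V.num.natDegree V.denom.natDegree := by
  classical
  set n := max V.num.natDegree V.denom.natDegree with hn
  set W := V.num.derivative * V.denom - V.num * V.denom.derivative with hW
  refine ⟨{c | V.num.coeff n - c * V.denom.coeff n = 0} ∪
      (fun z => V.num.eval z / V.denom.eval z) '' {z | W.eval z = 0}, ?_, ?_⟩
  · apply Set.Finite.union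
    · by_cases hdc : V.denom.coeff n = 0
      · have hnum : V.num.coeff n ≠ 0 := by
          have hdn : V.denom.natDegree ≠ n := by
            intro h
            exact Polynomial.leadingCoeff_ne_zero.mpr V.denom_ne_zero
              (by rw [Polynomial.leadingCoeff, h]; exact hdc)
          have hvn : V.num.natDegree = n := by omega
          exact hvn ▸ Polynomial.leadingCoeff_ne_zero.mpr (num_ne_zero_of_nonconst hV)
        convert Set.finite_empty
        ext c
        simp only [Set.mem_setOf_eq, hdc, mul_zero, sub_zero, Set.mem_empty_iff_false,
          iff_false]
        exact hnum
      · apply Set.Finite.subset (Set.finite_singleton (V.num.coeff n / V.denom.coeff n))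
        intro c hc
        simp only [Set.mem_setOf_eq] at hc
        simp only [Set.mem_singleton_iff]
        rw [eq_div_iff hdc]
        linear_combination -hc
    · exact (Polynomial.finite_setOf_isRoot (wronskian_ne_zero hV)).image _
  · intro c hc
    simp only [Set.mem_union, Set.mem_setOf_eq, not_or] at hc
    obtain ⟨hc1, hc2⟩ := hc
    set p := V.num - Polynomial.C c * V.denom with hp
    have hpne : p ≠ 0 := fiberpoly_ne_zero hV c
    have hcoeff : p.coeff n = V.num.coeff n - c * V.denom.coeff n := by
      simp [hp, Polynomial.coeff_sub]
    have hdeg : p.natDegree = n := by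
      refine le_antisymm ?_ (Polynomial.le_natDegree_of_ne_zero (by rw [hcoeff]; exact hc1))
      refine le_trans (Polynomial.natDegree_sub_le _ _) ?_
      refine max_le (le_max_left _ _) (le_trans (Polynomial.natDegree_mul_le) ?_)
      simp [hn]
    have hsep : p.Separable := by
      by_contra hns
      obtain ⟨z, hz1, hz2⟩ := exists_common_root_of_not_coprime hpne hns
      have hz1' : V.num.eval z = c * V.denom.eval z := by
        simp only [hp, eval_sub, eval_mul, eval_C] at hz1; linear_combination hz1
      have hdz : V.denom.eval z ≠ 0 := by
        intro h0
        exact no_common_root V (by rw [hz1', h0, mul_zero]) h0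
      have hz2' : V.num.derivative.eval z = c * V.denom.derivative.eval z := by
        simp only [hp, derivative_sub, derivative_C_mul, eval_sub, eval_mul, eval_C] at hz2
        linear_combination hz2
      apply hc2
      refine ⟨z, ?_, ?_⟩
      · simp only [Set.mem_setOf_eq, hW, eval_sub, eval_mul]
        rw [hz1', hz2']; ring
      · show V.num.eval z / V.denom.eval z = c
        rw [div_eq_iff hdz]
        linear_combination hz1'
    have hroots : Multiset.card p.roots = n := by
      rw [← hdeg]
      exact (Polynomial.splits_iff_card_roots.mp (IsAlgClosed.splits p)).symm ▸ rfl
    have hnodup : p.roots.Nodup := Polynomial.nodup_roots hsep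
    rw [rfiber_eq, roots_set_eq hpne, Set.ncard_coe_finset,
      Multiset.toFinset_card_of_nodup hnodup, hroots]

/-! ### Homogenization -/

noncomputable def homog (a v v' : ℂ[X]) (N : ℕ) : ℂ[X] :=
  ∑ i ∈ Finset.range (N + 1), Polynomial.C (a.coeff i) * v ^ i * v' ^ (N - i)

lemma div_pow_mul {K : Type*} [Field K] {y : K} (hy : y ≠ 0) (x : K) {e D : ℕ} (h : e ≤ D) :
    (x / y) ^ e * y ^ D = x ^ e * y ^ (D - e) := by
  rw [pow_sub₀ y hy h, div_pow]
  field_simp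

lemma homog_map {K : Type*} [Field K] (φ : ℂ[X] →+* K) (a v v' : ℂ[X]) {N : ℕ}
    (hN : a.natDegree < N + 1) (hv' : φ v' ≠ 0) :
    φ (homog a v v' N) = φ v' ^ N * a.eval₂ (φ.comp Polynomial.C) (φ v / φ v') := by
  rw [Polynomial.eval₂_eq_sum_range' _ hN, homog, map_sum, Finset.mul_sum]
  refine Finset.sum_congr rfl fun i hi => ?_
  rw [Finset.mem_range] at hi
  have h2 : (φ v / φ v') ^ i * φ v' ^ N = φ v ^ i * φ v' ^ (N - i) :=
    div_pow_mul hv' (φ v) (Nat.lt_succ_iff.mp hi)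
  rw [map_mul, map_mul, map_pow, map_pow, RingHom.comp_apply]
  linear_combination (-(φ (Polynomial.C (a.coeff i)))) * h2

lemma poly_algmap_comp_C :
    (algebraMap ℂ[X] (RatFunc ℂ)).comp Polynomial.C = algebraMap ℂ (RatFunc ℂ) := by
  ext c
  simp [RatFunc.algebraMap_C, RatFunc.algebraMap_eq_C]

lemma evalhom_comp_C (z : ℂ) : (Polynomial.evalRingHom z).comp Polynomial.C = RingHom.id ℂ := by
  ext c
  simp

lemma homog_ratfunc (a v v' : ℂ[X]) {N : ℕ} (hN : a.natDegree < N + 1) (hv' : v' ≠ 0) :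
    algebraMap ℂ[X] (RatFunc ℂ) (homog a v v' N)
      = algebraMap ℂ[X] (RatFunc ℂ) v' ^ N *
        Polynomial.aeval (algebraMap ℂ[X] (RatFunc ℂ) v / algebraMap ℂ[X] (RatFunc ℂ) v') a := by
  rw [homog_map _ a v v' hN (by exact RatFunc.algebraMap_ne_zero hv'), poly_algmap_comp_C,
    Polynomial.aeval_def]

lemma homog_eval (a v v' : ℂ[X]) {N : ℕ} (hN : a.natDegree < N + 1) (z : ℂ)
    (hv' : v'.eval z ≠ 0) :
    (homog a v v' N).eval z = v'.eval z ^ N * a.eval (v.eval z / v'.eval z) := by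
  have := homog_map (Polynomial.evalRingHom z) a v v' hN (by simpa using hv')
  simpa [evalhom_comp_C, Polynomial.eval₂_at_apply] using this

/-! ### Bi-homogenization for two-variable polynomials -/

noncomputable def bihom (r : MvPolynomial (Fin 2) ℂ) (v v' u w : ℂ[X]) (D : ℕ) : ℂ[X] :=
  ∑ m ∈ r.support, Polynomial.C (MvPolynomial.coeff m r) *
    (v ^ m 0 * v' ^ (D - m 0)) * (u ^ m 1 * w ^ (D - m 1))

lemma finsupp_apply_le_sum (m : Fin 2 →₀ ℕ) (i : Fin 2) : m i ≤ m.sum fun _ e => e := by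
  by_cases h : i ∈ m.support
  · exact Finset.single_le_sum (fun _ _ => Nat.zero_le _) h
  · simp [Finsupp.notMem_support_iff.mp h]

lemma bihom_map {K : Type*} [Field K] (φ : ℂ[X] →+* K) (r : MvPolynomial (Fin 2) ℂ)
    (v v' u w : ℂ[X]) {D : ℕ} (hD : r.totalDegree ≤ D) (hv' : φ v' ≠ 0) (hw : φ w ≠ 0) :
    φ (bihom r v v' u w D) = (φ v' * φ w) ^ D *
      MvPolynomial.eval₂ (φ.comp Polynomial.C) ![φ v / φ v', φ u / φ w] r := by
  rw [MvPolynomial.eval₂_eq' (φ.comp Polynomial.C) _ r, bihom, map_sum, Finset.mul_sum]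
  refine Finset.sum_congr rfl fun m hm => ?_
  have h0 : m 0 ≤ D := le_trans (le_trans (finsupp_apply_le_sum m 0)
    (MvPolynomial.le_totalDegree hm)) hD
  have h1 : m 1 ≤ D := le_trans (le_trans (finsupp_apply_le_sum m 1)
    (MvPolynomial.le_totalDegree hm)) hD
  have e1 := div_pow_mul hv' (φ v) h0
  have e2 := div_pow_mul hw (φ u) h1
  simp only [map_mul, map_pow, RingHom.comp_apply, Fin.prod_univ_two, Matrix.cons_val_zero,
    Matrix.cons_val_one, Matrix.head_cons]
  set A := φ (Polynomial.C (MvPolynomial.coeff m r))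
  rw [mul_pow]
  linear_combination (-(A * (φ u / φ w) ^ m 1 * φ w ^ D)) * e1 +
    (-(A * φ v ^ m 0 * φ v' ^ (D - m 0))) * e2

lemma bihom_ratfunc (r : MvPolynomial (Fin 2) ℂ) (V B : RatFunc ℂ) {D : ℕ}
    (hD : r.totalDegree ≤ D) :
    algebraMap ℂ[X] (RatFunc ℂ) (bihom r V.num V.denom B.num B.denom D)
      = (algebraMap ℂ[X] (RatFunc ℂ) V.denom * algebraMap ℂ[X] (RatFunc ℂ) B.denom) ^ D *
        MvPolynomial.aeval ![V, B] r := by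
  rw [bihom_map (algebraMap ℂ[X] (RatFunc ℂ)) r V.num V.denom B.num B.denom hD
    (RatFunc.algebraMap_ne_zero V.denom_ne_zero) (RatFunc.algebraMap_ne_zero B.denom_ne_zero),
    poly_algmap_comp_C, MvPolynomial.aeval_def, RatFunc.num_div_denom, RatFunc.num_div_denom]

lemma bihom_eval (r : MvPolynomial (Fin 2) ℂ) (V B : RatFunc ℂ) {D : ℕ}
    (hD : r.totalDegree ≤ D) (z : ℂ) (hv' : V.denom.eval z ≠ 0) (hw : B.denom.eval z ≠ 0) :
    (bihom r V.num V.denom B.num B.denom D).eval z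
      = (V.denom.eval z * B.denom.eval z) ^ D *
        MvPolynomial.eval ![V.num.eval z / V.denom.eval z, B.num.eval z / B.denom.eval z] r := by
  have := bihom_map (Polynomial.evalRingHom z) r V.num V.denom B.num B.denom hD
    (by simpa using hv') (by simpa using hw)
  simpa [evalhom_comp_C, MvPolynomial.eval₂_id] using this

/-! ### The semiconjugacy as a polynomial identity -/

lemma rcomp_eq (p q : RatFunc ℂ) :
    rcomp p q = Polynomial.aeval q p.num / Polynomial.aeval q p.denom := rfl

lemma semiconj_poly {A B V : RatFunc ℂ} (hB : Nonconstant B) (hV : Nonconstant V)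
    (hsemi : rcomp A V = rcomp V B) :
    homog A.num V.num V.denom (max A.num.natDegree A.denom.natDegree) *
      homog V.denom B.num B.denom (max V.num.natDegree V.denom.natDegree) =
    homog V.num B.num B.denom (max V.num.natDegree V.denom.natDegree) *
      homog A.denom V.num V.denom (max A.num.natDegree A.denom.natDegree) := by
  set N := max A.num.natDegree A.denom.natDegree
  set M := max V.num.natDegree V.denom.natDegree
  have ha' : Polynomial.aeval V A.denom ≠ 0 := aeval_ne_zero_of_nonconst hV A.denom_ne_zero
  have hv' : Polynomial.aeval B V.denom ≠ 0 := aeval_ne_zero_of_nonconst hB V.denom_ne_zero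
  rw [rcomp_eq, rcomp_eq, div_eq_div_iff ha' hv'] at hsemi
  apply RatFunc.algebraMap_injective ℂ
  have e1 := homog_ratfunc A.num V.num V.denom
    (Nat.lt_succ_of_le (le_max_left _ _) : A.num.natDegree < N + 1) V.denom_ne_zero
  have e2 := homog_ratfunc A.denom V.num V.denom
    (Nat.lt_succ_of_le (le_max_right _ _) : A.denom.natDegree < N + 1) V.denom_ne_zero
  have e3 := homog_ratfunc V.num B.num B.denom
    (Nat.lt_succ_of_le (le_max_left _ _) : V.num.natDegree < M + 1) B.denom_ne_zero
  have e4 := homog_ratfunc V.denom B.num B.denom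
    (Nat.lt_succ_of_le (le_max_right _ _) : V.denom.natDegree < M + 1) B.denom_ne_zero
  rw [RatFunc.num_div_denom] at e1 e2
  rw [RatFunc.num_div_denom] at e3 e4
  rw [map_mul, map_mul, e1, e2, e3, e4]
  ring_nf
  linear_combination (algebraMap ℂ[X] (RatFunc ℂ) V.denom ^ N *
    algebraMap ℂ[X] (RatFunc ℂ) B.denom ^ M) * hsemi

/-! ### The compositum condition as a polynomial identity -/

lemma range_pair (V B : RatFunc ℂ) : ({V, B} : Set (RatFunc ℂ)) = Set.range ![V, B] := by
  ext x
  simp [Fin.exists_fin_two, eq_comm]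
  tauto

lemma compositum_poly {V B : RatFunc ℂ}
    (hcompositum : IntermediateField.adjoin ℂ ({V, B} : Set (RatFunc ℂ)) = ⊤) :
    ∃ (r s : MvPolynomial (Fin 2) ℂ) (D : ℕ), r.totalDegree ≤ D ∧ s.totalDegree ≤ D ∧
      bihom s V.num V.denom B.num B.denom D ≠ 0 ∧
      bihom r V.num V.denom B.num B.denom D =
        Polynomial.X * bihom s V.num V.denom B.num B.denom D := by
  have hX : (RatFunc.X : RatFunc ℂ) ∈ IntermediateField.adjoin ℂ (Set.range ![V, B]) := by
    rw [← range_pair, hcompositum]; trivial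
  obtain ⟨r, s, hrs⟩ := (IntermediateField.mem_adjoin_range_iff ℂ ![V, B] _).mp hX
  have hs : MvPolynomial.aeval ![V, B] s ≠ 0 := by
    intro h0
    rw [h0, div_zero] at hrs
    exact RatFunc.X_ne_zero hrs
  refine ⟨r, s, max r.totalDegree s.totalDegree, le_max_left _ _, le_max_right _ _, ?_, ?_⟩
  · intro h0
    have := bihom_ratfunc s V B (le_max_right r.totalDegree s.totalDegree)
    rw [h0, map_zero] at this
    exact hs (by
      have hne : (algebraMap ℂ[X] (RatFunc ℂ) V.denom * algebraMap ℂ[X] (RatFunc ℂ) B.denom)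
          ^ (max r.totalDegree s.totalDegree) ≠ 0 :=
        pow_ne_zero _ (mul_ne_zero (RatFunc.algebraMap_ne_zero V.denom_ne_zero)
          (RatFunc.algebraMap_ne_zero B.denom_ne_zero))
      exact (mul_eq_zero.mp this.symm).resolve_left hne)
  · apply RatFunc.algebraMap_injective ℂ
    rw [map_mul, bihom_ratfunc r V B (le_max_left _ _), bihom_ratfunc s V B (le_max_right _ _),
      RatFunc.algebraMap_X]
    rw [eq_div_iff hs] at hrs
    linear_combination ((algebraMap ℂ[X] (RatFunc ℂ) V.denom *
      algebraMap ℂ[X] (RatFunc ℂ) B.denom) ^ (max r.totalDegree s.totalDegree)) * hrs.symm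

/-! ### Main theorem -/

theorem stmt7 (A B V : RatFunc ℂ)
    (hA : Nonconstant A) (hB : Nonconstant B) (hV : Nonconstant V)
    (hsemi : rcomp A V = rcomp V B)
    (hcompositum : IntermediateField.adjoin ℂ ({V, B} : Set (RatFunc ℂ)) = ⊤) :
    ∃ E : Set ℂ, E.Finite ∧ ∀ z₀ : ℂ, z₀ ∉ E →
      (∀ z ∈ rfiber V z₀, Polynomial.eval z B.denom ≠ 0) ∧
      Set.BijOn (fun z : ℂ => RatFunc.eval (RingHom.id ℂ) z B) (rfiber V z₀)
        (rfiber V (RatFunc.eval (RingHom.id ℂ) z₀ A)) := by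
  classical
  obtain ⟨EV, hEVfin, hEV⟩ := card_fiber hV
  obtain ⟨r, s, D, hrD, hsD, hSne, hRS⟩ := compositum_poly hcompositum
  set N := max A.num.natDegree A.denom.natDegree with hN
  set M := max V.num.natDegree V.denom.natDegree with hM
  have hpoly := semiconj_poly hB hV hsemi
  refine ⟨EV ∪ {z₀ | A.denom.eval z₀ = 0} ∪ {z₀ | RatFunc.eval (RingHom.id ℂ) z₀ A ∈ EV} ∪
      ((fun z => RatFunc.eval (RingHom.id ℂ) z V) '' {z | B.denom.eval z = 0}) ∪
      ((fun z => RatFunc.eval (RingHom.id ℂ) z V) ''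
        {z | (bihom s V.num V.denom B.num B.denom D).eval z = 0}), ?_, ?_⟩
  · refine (((hEVfin.union ?_).union ?_).union ?_).union ?_
    · exact Polynomial.finite_setOf_isRoot A.denom_ne_zero
    · have hsub : {z₀ : ℂ | RatFunc.eval (RingHom.id ℂ) z₀ A ∈ EV} ⊆
          {z₀ | A.denom.eval z₀ = 0} ∪ ⋃ c ∈ EV, rfiber A c := by
        intro z₀ hz₀
        by_cases h1 : A.denom.eval z₀ = 0
        · exact Or.inl h1
        · exact Or.inr (Set.mem_biUnion hz₀ ⟨h1, rfl⟩)
      exact Set.Finite.subset ((Polynomial.finite_setOf_isRoot A.denom_ne_zero).union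
        (hEVfin.biUnion fun c _ => rfiber_finite hA c)) hsub
    · exact (Polynomial.finite_setOf_isRoot B.denom_ne_zero).image _
    · exact (Polynomial.finite_setOf_isRoot hSne).image _
  · intro z₀ hz₀
    simp only [Set.mem_union, not_or] at hz₀
    obtain ⟨⟨⟨⟨hz₀EV, hz₀E1⟩, hz₀E2⟩, hz₀E3⟩, hz₀E4⟩ := hz₀
    have hA' : A.denom.eval z₀ ≠ 0 := hz₀E1
    have hc'EV : RatFunc.eval (RingHom.id ℂ) z₀ A ∉ EV := hz₀E2
    set c' := RatFunc.eval (RingHom.id ℂ) z₀ A with hc'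
    have hc'A : c' = A.num.eval z₀ / A.denom.eval z₀ := rfl
    -- basic facts for points of the fiber
    have hfib : ∀ z ∈ rfiber V z₀, V.denom.eval z ≠ 0 ∧ V.num.eval z / V.denom.eval z = z₀
        ∧ B.denom.eval z ≠ 0 ∧ (bihom s V.num V.denom B.num B.denom D).eval z ≠ 0 := by
      intro z hz
      obtain ⟨h1, h2⟩ := hz
      rw [ratfunc_eval_eq] at h2
      refine ⟨h1, h2, ?_, ?_⟩
      · intro h0
        exact hz₀E3 ⟨z, h0, by
          show RatFunc.eval (RingHom.id ℂ) z V = z₀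
          rw [ratfunc_eval_eq]; exact h2⟩
      · intro h0
        exact hz₀E4 ⟨z, h0, by
          show RatFunc.eval (RingHom.id ℂ) z V = z₀
          rw [ratfunc_eval_eq]; exact h2⟩
    have hmaps : Set.MapsTo (fun z => RatFunc.eval (RingHom.id ℂ) z B) (rfiber V z₀)
        (rfiber V c') := by
      intro z hz
      obtain ⟨hv'z, hVz, hwz, hSz⟩ := hfib z hz
      have e1 := homog_eval A.num V.num V.denom
        (Nat.lt_succ_of_le (le_max_left _ _) : A.num.natDegree < N + 1) z hv'z
      have e2 := homog_eval A.denom V.num V.denom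
        (Nat.lt_succ_of_le (le_max_right _ _) : A.denom.natDegree < N + 1) z hv'z
      have e3 := homog_eval V.num B.num B.denom
        (Nat.lt_succ_of_le (le_max_left _ _) : V.num.natDegree < M + 1) z hwz
      have e4 := homog_eval V.denom B.num B.denom
        (Nat.lt_succ_of_le (le_max_right _ _) : V.denom.natDegree < M + 1) z hwz
      rw [hVz] at e1 e2
      have hid := congrArg (Polynomial.eval z) hpoly
      rw [eval_mul, eval_mul, e1, e2, e3, e4] at hid
      set b := B.num.eval z / B.denom.eval z with hb
      have hcan : A.num.eval z₀ * V.denom.eval b = V.num.eval b * A.denom.eval z₀ := by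
        have hnz : V.denom.eval z ^ N * B.denom.eval z ^ M ≠ 0 :=
          mul_ne_zero (pow_ne_zero _ hv'z) (pow_ne_zero _ hwz)
        apply mul_left_cancel₀ hnz
        linear_combination hid
      have hvb : V.denom.eval b ≠ 0 := by
        intro h0
        have h1 : V.num.eval b * A.denom.eval z₀ = 0 := by rw [← hcan, h0, mul_zero]
        have h2 : V.num.eval b = 0 := (mul_eq_zero.mp h1).resolve_right hA'
        exact no_common_root V h2 h0
      refine ⟨hvb, ?_⟩
      rw [ratfunc_eval_eq]
      show V.num.eval b / V.denom.eval b = c'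
      rw [hc'A, div_eq_div_iff hvb hA']
      linear_combination -hcan
    have hinj : Set.InjOn (fun z => RatFunc.eval (RingHom.id ℂ) z B) (rfiber V z₀) := by
      intro z₁ hz₁ z₂ hz₂ heq
      obtain ⟨h1v, h1V, h1w, h1S⟩ := hfib z₁ hz₁
      obtain ⟨h2v, h2V, h2w, h2S⟩ := hfib z₂ hz₂
      have heq' : B.num.eval z₁ / B.denom.eval z₁ = B.num.eval z₂ / B.denom.eval z₂ := heq
      have q1 := congrArg (Polynomial.eval z₁) hRS
      have q2 := congrArg (Polynomial.eval z₂) hRS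
      rw [eval_mul, eval_X] at q1 q2
      have r1 := bihom_eval r V B hrD z₁ h1v h1w
      have s1 := bihom_eval s V B hsD z₁ h1v h1w
      have r2 := bihom_eval r V B hrD z₂ h2v h2w
      have s2 := bihom_eval s V B hsD z₂ h2v h2w
      rw [h1V] at r1 s1
      rw [h2V] at r2 s2
      rw [← heq'] at r2 s2
      set b := B.num.eval z₁ / B.denom.eval z₁ with hb
      set rv := MvPolynomial.eval ![z₀, b] r with hrv
      set sv := MvPolynomial.eval ![z₀, b] s with hsv
      have hsvne : sv ≠ 0 := by
        intro h0
        apply h1S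
        rw [s1, h0, mul_zero]
      have hC1 : (V.denom.eval z₁ * B.denom.eval z₁) ^ D ≠ 0 :=
        pow_ne_zero _ (mul_ne_zero h1v h1w)
      have hC2 : (V.denom.eval z₂ * B.denom.eval z₂) ^ D ≠ 0 :=
        pow_ne_zero _ (mul_ne_zero h2v h2w)
      have ee1 : rv = z₁ * sv := by
        apply mul_left_cancel₀ hC1
        calc (Polynomial.eval z₁ V.denom * Polynomial.eval z₁ B.denom) ^ D * rv
            = Polynomial.eval z₁ (bihom r V.num V.denom B.num B.denom D) := r1.symm
          _ = z₁ * Polynomial.eval z₁ (bihom s V.num V.denom B.num B.denom D) := q1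
          _ = z₁ * ((Polynomial.eval z₁ V.denom * Polynomial.eval z₁ B.denom) ^ D * sv) := by
              rw [s1]
          _ = (Polynomial.eval z₁ V.denom * Polynomial.eval z₁ B.denom) ^ D * (z₁ * sv) := by
              ring
      have ee2 : rv = z₂ * sv := by
        apply mul_left_cancel₀ hC2
        calc (Polynomial.eval z₂ V.denom * Polynomial.eval z₂ B.denom) ^ D * rv
            = Polynomial.eval z₂ (bihom r V.num V.denom B.num B.denom D) := r2.symm
          _ = z₂ * Polynomial.eval z₂ (bihom s V.num V.denom B.num B.denom D) := q2
          _ = z₂ * ((Polynomial.eval z₂ V.denom * Polynomial.eval z₂ B.denom) ^ D * sv) := by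
              rw [s2]
          _ = (Polynomial.eval z₂ V.denom * Polynomial.eval z₂ B.denom) ^ D * (z₂ * sv) := by
              ring
      exact mul_right_cancel₀ hsvne (ee1.symm.trans ee2)
    have hcard1 := hEV z₀ hz₀EV
    have hcard2 := hEV c' hc'EV
    have htfin := rfiber_finite hV c'
    have himage : (fun z => RatFunc.eval (RingHom.id ℂ) z B) '' (rfiber V z₀) = rfiber V c' := by
      apply Set.eq_of_subset_of_ncard_le (Set.MapsTo.image_subset hmaps) ?_ htfin
      rw [Set.ncard_image_of_injOn hinj, hcard1, hcard2]
    exact ⟨fun z hz => (hfib z hz).2.2.1, hmaps, hinj, fun y hy => himage ▸ hy⟩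
end

section
/- Let θ(z) = −(z⁸ + 14z⁴ + 1)³/(108 z⁴ (z⁴ − 1)⁴), let V(z) = 3z⁴ − 4z³, and let θ₁(z) = (((1+i)/6)z² − (i/3)z + ((1−i)/6)) · (z⁴ + 2z³ + 2z² − 2z + 1) / ((z² + 1)(z + 1)(z − 1)z). Then θ = V ∘ θ₁ as rational functions, i.e., θ(z) = V(θ₁(z)) for all z ∈ ℂ where both sides are defined. -/
/-! Writing `θ₁ = N / D` with `D = 6z(z⁴ − 1)`, we get `V(θ₁) = (3N⁴ − 4N³D) / D⁴`, and the
numerator is the polynomial `−12(z⁸ + 14z⁴ + 1)³`; since `D⁴ = 12 · 108 z⁴(z⁴ − 1)⁴`, this is `θ`. -/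

open Complex

theorem three_mul_div_pow_four_sub_four_mul_div_pow_three {K : Type*} [Field K] (a b : K)
    (hb : b ≠ 0) :
    3 * (a / b) ^ 4 - 4 * (a / b) ^ 3 = (3 * a ^ 4 - 4 * a ^ 3 * b) / b ^ 4 := by
  field_simp

theorem three_mul_pow_four_sub_four_mul_pow_three_mul_eq (z : ℂ) :
    3 * (((1 + I) * z ^ 2 - 2 * I * z + (1 - I)) * (z ^ 4 + 2 * z ^ 3 + 2 * z ^ 2 - 2 * z + 1)) ^ 4
      - 4 * (((1 + I) * z ^ 2 - 2 * I * z + (1 - I)) * (z ^ 4 + 2 * z ^ 3 + 2 * z ^ 2 - 2 * z + 1)) ^ 3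
        * (6 * z * (z ^ 4 - 1)) =
      -12 * (z ^ 8 + 14 * z ^ 4 + 1) ^ 3 := by
  ring_nf
  simp only [I_sq, I_pow_four, show I ^ 3 = -I by rw [pow_succ, I_sq]; ring]
  ring

open Complex in
theorem stmt10_general (z t : ℂ)
    (hθ₁ : (z ^ 2 + 1) * (z + 1) * (z - 1) * z ≠ 0)
    (ht : t = (((1 + I) / 6) * z ^ 2 - (I / 3) * z + (1 - I) / 6) *
        (z ^ 4 + 2 * z ^ 3 + 2 * z ^ 2 - 2 * z + 1) /
      ((z ^ 2 + 1) * (z + 1) * (z - 1) * z)) :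
    -(z ^ 8 + 14 * z ^ 4 + 1) ^ 3 / (108 * z ^ 4 * (z ^ 4 - 1) ^ 4) =
      3 * t ^ 4 - 4 * t ^ 3 := by
  have hD : 6 * z * (z ^ 4 - 1) ≠ 0 := by
    convert mul_ne_zero (by norm_num : (6 : ℂ) ≠ 0) hθ₁ using 1
    ring
  obtain ⟨hz, hz4⟩ : z ≠ 0 ∧ z ^ 4 - 1 ≠ 0 := by simpa using hD
  have ht' : t = ((1 + I) * z ^ 2 - 2 * I * z + (1 - I)) *
      (z ^ 4 + 2 * z ^ 3 + 2 * z ^ 2 - 2 * z + 1) / (6 * z * (z ^ 4 - 1)) := by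
    rw [ht, div_eq_div_iff hθ₁ hD]
    ring
  rw [ht', three_mul_div_pow_four_sub_four_mul_div_pow_three _ _ hD,
    three_mul_pow_four_sub_four_mul_pow_three_mul_eq]
  field_simp
  ring

open Complex in
/-- `θ = V ∘ θ₁` for `θ(z) = −(z⁸ + 14z⁴ + 1)³/(108 z⁴ (z⁴ − 1)⁴)`, `V(z) = 3z⁴ − 4z³` and
`θ₁(z) = (((1+i)/6)z² − (i/3)z + ((1−i)/6))(z⁴ + 2z³ + 2z² − 2z + 1)/((z² + 1)(z + 1)(z − 1)z)`:
the identity `θ(z) = V(θ₁(z))` holds for every `z ∈ ℂ` where both sides are defined. -/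
theorem stmt10 (z t : ℂ)
    (hθ : z ^ 4 * (z ^ 4 - 1) ≠ 0)
    (hθ₁ : (z ^ 2 + 1) * (z + 1) * (z - 1) * z ≠ 0)
    (ht : t = (((1 + I) / 6) * z ^ 2 - (I / 3) * z + (1 - I) / 6) *
        (z ^ 4 + 2 * z ^ 3 + 2 * z ^ 2 - 2 * z + 1) /
      ((z ^ 2 + 1) * (z + 1) * (z - 1) * z)) :
    -(z ^ 8 + 14 * z ^ 4 + 1) ^ 3 / (108 * z ^ 4 * (z ^ 4 - 1) ^ 4) =
      3 * t ^ 4 - 4 * t ^ 3 :=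
  stmt10_general z t hθ₁ ht
end

section
/- Let θ(z) = −(z⁸ + 14z⁴ + 1)³/(108 z⁴ (z⁴ − 1)⁴), let F(z) = (−z⁵ + 5z)/(5z⁴ − 1), and let A(z) = z²(z³ − 240z² + 19200z − 512000)/(625z⁴ + 16000z³ + 153600z² + 655360z + 1048576). Then θ ∘ F = A ∘ θ as rational functions, i.e., θ(F(z)) = A(θ(z)) for all z ∈ ℂ where both sides are defined. -/
/-!
Both maps are quotients of binary forms: `θ(p/q) = thetaNum p q / thetaDen p q` with forms of
degree 24, and `A(n/d) = descentNum n d / descentDen n d` with forms of degree 5. Hence both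
`θ(F(z))` and `A(θ(z))` are quotients of polynomials of degree 120 in `z`, and cross-multiplying
reduces the claim to a single polynomial identity, which `ring` verifies.
-/

section Forms

variable {R : Type*} [CommRing R]

def thetaNum (p q : R) : R := -(p ^ 8 + 14 * p ^ 4 * q ^ 4 + q ^ 8) ^ 3

def thetaDen (p q : R) : R := 108 * p ^ 4 * q ^ 4 * (p ^ 4 - q ^ 4) ^ 4

def descentNum (n d : R) : R :=
  n ^ 2 * (n ^ 3 - 240 * n ^ 2 * d + 19200 * n * d ^ 2 - 512000 * d ^ 3)

def descentDen (n d : R) : R :=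
  d * (625 * n ^ 4 + 16000 * n ^ 3 * d + 153600 * n ^ 2 * d ^ 2 + 655360 * n * d ^ 3
    + 1048576 * d ^ 4)

theorem thetaNum_mul_descentDen_eq_descentNum_mul_thetaDen (z : R) :
    thetaNum (-z ^ 5 + 5 * z) (5 * z ^ 4 - 1) * descentDen (thetaNum z 1) (thetaDen z 1) =
      descentNum (thetaNum z 1) (thetaDen z 1) * thetaDen (-z ^ 5 + 5 * z) (5 * z ^ 4 - 1) := by
  simp only [thetaNum, thetaDen, descentNum, descentDen]
  ring

end Forms

section Dehomogenize

variable {K : Type*} [Field K] {p q n d : K}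

def theta (z : K) : K :=
  -(z ^ 8 + 14 * z ^ 4 + 1) ^ 3 / (108 * z ^ 4 * (z ^ 4 - 1) ^ 4)

def descent (u : K) : K :=
  u ^ 2 * (u ^ 3 - 240 * u ^ 2 + 19200 * u - 512000) /
    (625 * u ^ 4 + 16000 * u ^ 3 + 153600 * u ^ 2 + 655360 * u + 1048576)

theorem thetaNum_eq (hq : q ≠ 0) :
    thetaNum p q = q ^ 24 * -((p / q) ^ 8 + 14 * (p / q) ^ 4 + 1) ^ 3 := by
  simp only [thetaNum]
  field_simp

theorem thetaDen_eq (hq : q ≠ 0) :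
    thetaDen p q = q ^ 24 * (108 * (p / q) ^ 4 * ((p / q) ^ 4 - 1) ^ 4) := by
  simp only [thetaDen]
  field_simp

theorem thetaDen_ne_zero [CharZero K] (hq : q ≠ 0) (h : (p / q) ^ 4 * ((p / q) ^ 4 - 1) ≠ 0) :
    thetaDen p q ≠ 0 := by
  obtain ⟨h₁, h₂⟩ := mul_ne_zero_iff.1 h
  rw [thetaDen_eq hq]
  exact mul_ne_zero (pow_ne_zero _ hq)
    (mul_ne_zero (mul_ne_zero (by norm_num) h₁) (pow_ne_zero _ h₂))

theorem theta_eq_thetaNum_div_thetaDen (z : K) : theta z = thetaNum z 1 / thetaDen z 1 := by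
  simp only [theta, thetaNum, thetaDen, one_pow, mul_one]

theorem theta_div (hq : q ≠ 0) : theta (p / q) = thetaNum p q / thetaDen p q := by
  rw [thetaNum_eq hq, thetaDen_eq hq, mul_div_mul_left _ _ (pow_ne_zero _ hq), theta]

theorem descentDen_eq (hd : d ≠ 0) :
    descentDen n d = d ^ 5 * (625 * (n / d) ^ 4 + 16000 * (n / d) ^ 3 + 153600 * (n / d) ^ 2
      + 655360 * (n / d) + 1048576) := by
  simp only [descentDen]
  field_simp

theorem descent_div (hd : d ≠ 0) : descent (n / d) = descentNum n d / descentDen n d := by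
  rw [descentDen_eq hd, descent, ← mul_div_mul_left _ _ (pow_ne_zero 5 hd), descentNum]
  field_simp

end Dehomogenize

/-- `θ ∘ F = A ∘ θ` for `θ(z) = −(z⁸ + 14z⁴ + 1)³/(108 z⁴ (z⁴ − 1)⁴)`,
`F(z) = (−z⁵ + 5z)/(5z⁴ − 1)` and
`A(z) = z²(z³ − 240z² + 19200z − 512000)/(625z⁴ + 16000z³ + 153600z² + 655360z + 1048576)`:
the identity `θ(F(z)) = A(θ(z))` holds for every `z ∈ ℂ` where both sides are defined. -/
theorem stmt11 (z w u : ℂ)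
    (hF : 5 * z ^ 4 - 1 ≠ 0)
    (hw : w = (-z ^ 5 + 5 * z) / (5 * z ^ 4 - 1))
    (hθw : w ^ 4 * (w ^ 4 - 1) ≠ 0)
    (hθz : z ^ 4 * (z ^ 4 - 1) ≠ 0)
    (hu : u = -(z ^ 8 + 14 * z ^ 4 + 1) ^ 3 / (108 * z ^ 4 * (z ^ 4 - 1) ^ 4))
    (hAu : 625 * u ^ 4 + 16000 * u ^ 3 + 153600 * u ^ 2 + 655360 * u + 1048576 ≠ 0) :
    -(w ^ 8 + 14 * w ^ 4 + 1) ^ 3 / (108 * w ^ 4 * (w ^ 4 - 1) ^ 4) =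
      u ^ 2 * (u ^ 3 - 240 * u ^ 2 + 19200 * u - 512000) /
        (625 * u ^ 4 + 16000 * u ^ 3 + 153600 * u ^ 2 + 655360 * u + 1048576) := by
  change theta w = descent u
  have hu' : u = thetaNum z 1 / thetaDen z 1 := hu.trans (theta_eq_thetaNum_div_thetaDen z)
  have hdz : thetaDen z 1 ≠ 0 := thetaDen_ne_zero one_ne_zero (by rwa [div_one])
  have hdw : thetaDen (-z ^ 5 + 5 * z) (5 * z ^ 4 - 1) ≠ 0 := thetaDen_ne_zero hF (hw ▸ hθw)
  have hdu : descentDen (thetaNum z 1) (thetaDen z 1) ≠ 0 := by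
    rw [descentDen_eq hdz, ← hu']
    exact mul_ne_zero (pow_ne_zero 5 hdz) hAu
  rw [hw, theta_div hF, hu', descent_div hdz, div_eq_div_iff hdw hdu]
  exact thetaNum_mul_descentDen_eq_descentNum_mul_thetaDen z
end

section
/- Let F(z) = (−z⁵ + 5z)/(5z⁴ − 1). Then F is equivariant with respect to the group of Möbius transformations generated by σ₁(z) = iz and σ₂(z) = (z + i)/(z − i); in particular, F(iz) = i·F(z) and F((z + i)/(z − i)) = (F(z) + i)/(F(z) − i) hold as identities of rational functions (i.e., for all z ∈ ℂ where both sides are defined). -/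
/-!
Write `F = P / Q` with the binary quintic forms `P(x, y) = -x⁵ + 5xy⁴` and `Q(x, y) = 5x⁴y - y⁵`.
A Möbius map acts on `z = x / y` through the linear substitution given by its matrix, and since
`P` and `Q` have the same degree the scalar factors cancel in `F`. Equivariance thus reduces to two
polynomial identities: `(P, Q)(ix, y) = (iP, Q)` for `σ₁`, and
`(P, Q)(x + iy, x - iy) = -4 (P + iQ, P - iQ)` for `σ₂`, i.e. the matrix of `σ₂` acts on the
pair `(P, Q)` as it does on `(x, y)`, up to the scalar `-4`.
-/

open Complex

namespace OctahedralQuintic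

def numForm (x y : ℂ) : ℂ := -x ^ 5 + 5 * x * y ^ 4

def denForm (x y : ℂ) : ℂ := 5 * x ^ 4 * y - y ^ 5

noncomputable def quinticMap (z : ℂ) : ℂ := (-z ^ 5 + 5 * z) / (5 * z ^ 4 - 1)

theorem numForm_smul (c x y : ℂ) : numForm (c * x) (c * y) = c ^ 5 * numForm x y := by
  unfold numForm; ring

theorem denForm_smul (c x y : ℂ) : denForm (c * x) (c * y) = c ^ 5 * denForm x y := by
  unfold denForm; ring

theorem numForm_I_mul (x y : ℂ) : numForm (I * x) y = I * numForm x y := by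
  unfold numForm; grind [I_sq]

theorem denForm_I_mul (x y : ℂ) : denForm (I * x) y = denForm x y := by
  unfold denForm; grind [I_sq]

theorem numForm_cayley (x y : ℂ) :
    numForm (x + I * y) (x - I * y) = -4 * (numForm x y + I * denForm x y) := by
  unfold numForm denForm; grind [I_sq]

theorem denForm_cayley (x y : ℂ) :
    denForm (x + I * y) (x - I * y) = -4 * (numForm x y - I * denForm x y) := by
  unfold numForm denForm; grind [I_sq]

theorem quinticMap_eq (z : ℂ) : quinticMap z = numForm z 1 / denForm z 1 := by
  simp only [quinticMap, numForm, denForm, one_pow, mul_one]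

theorem quinticMap_div {a b : ℂ} (hb : b ≠ 0) : quinticMap (a / b) = numForm a b / denForm a b := by
  rw [quinticMap_eq, div_eq_inv_mul a b, ← inv_mul_cancel₀ hb, numForm_smul, denForm_smul,
    mul_div_mul_left _ _ (pow_ne_zero 5 (inv_ne_zero hb))]

theorem quinticMap_I_mul (z : ℂ) : quinticMap (I * z) = I * quinticMap z := by
  rw [quinticMap_eq, quinticMap_eq, numForm_I_mul, denForm_I_mul, mul_div_assoc]

theorem div_add_div_sub {K : Type*} [Field K] (a c : K) {d : K} (hd : d ≠ 0) :
    (a / d + c) / (a / d - c) = (a + c * d) / (a - c * d) := by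
  rw [div_add' _ _ _ hd, div_sub' hd, div_div_div_cancel_right₀ hd, mul_comm d c]

theorem quinticMap_cayley {z : ℂ} (hz : z - I ≠ 0) (hD : 5 * z ^ 4 - 1 ≠ 0) :
    quinticMap ((z + I) / (z - I)) = (quinticMap z + I) / (quinticMap z - I) := by
  have hD' : denForm z 1 ≠ 0 := by simpa [denForm] using hD
  have hnum := numForm_cayley z 1
  have hden := denForm_cayley z 1
  rw [mul_one] at hnum hden
  rw [quinticMap_div hz, hnum, hden, mul_div_mul_left _ _ (by norm_num), quinticMap_eq,
    div_add_div_sub _ _ hD']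

end OctahedralQuintic

open OctahedralQuintic

open Complex in
/-- `F(z) = (−z⁵ + 5z)/(5z⁴ − 1)` is equivariant with respect to the group of Möbius
transformations generated by `σ₁(z) = iz` and `σ₂(z) = (z + i)/(z − i)`: the identities
`F(iz) = i·F(z)` and `F((z + i)/(z − i)) = (F(z) + i)/(F(z) − i)` hold for all `z ∈ ℂ`
where both sides are defined (equivariance with respect to the two generators is equivalent
to equivariance with respect to the whole group). -/
theorem stmt12 :
    (∀ z : ℂ, 5 * z ^ 4 - 1 ≠ 0 →
      (-(I * z) ^ 5 + 5 * (I * z)) / (5 * (I * z) ^ 4 - 1) =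
        I * ((-z ^ 5 + 5 * z) / (5 * z ^ 4 - 1))) ∧
    (∀ z w : ℂ, z - I ≠ 0 → w = (z + I) / (z - I) → 5 * w ^ 4 - 1 ≠ 0 →
      5 * z ^ 4 - 1 ≠ 0 → (-z ^ 5 + 5 * z) / (5 * z ^ 4 - 1) - I ≠ 0 →
      (-w ^ 5 + 5 * w) / (5 * w ^ 4 - 1) =
        ((-z ^ 5 + 5 * z) / (5 * z ^ 4 - 1) + I) /
          ((-z ^ 5 + 5 * z) / (5 * z ^ 4 - 1) - I)) := by
  refine ⟨fun z _ => quinticMap_I_mul z, ?_⟩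
  rintro z w hz rfl - hD -
  exact quinticMap_cayley hz hD
end

section
/- Let θ(z) = −(z⁸ + 14z⁴ + 1)³/(108 z⁴ (z⁴ − 1)⁴). For every rational number a with a ∉ {0, 1, −1}, every z ∈ ℂ satisfying θ(z) = θ(a) (in particular z⁴(z⁴ − 1) ≠ 0) lies in the field ℚ(i). -/
open Complex in
lemma quartic_mem_adjoin_I {c z : ℂ}
    (hc : c ∈ IntermediateField.adjoin ℚ ({I} : Set ℂ)) (h : z ^ 4 = c ^ 4) :
    z ∈ IntermediateField.adjoin ℚ ({I} : Set ℂ) := by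
  set K := IntermediateField.adjoin ℚ ({I} : Set ℂ) with hK
  have hI : I ∈ K := IntermediateField.subset_adjoin ℚ _ rfl
  have hfac : (z - c) * (z + c) * (z - I * c) * (z + I * c) = 0 := by
    linear_combination h + (c ^ 4 - c ^ 2 * z ^ 2) * Complex.I_sq
  rcases mul_eq_zero.1 hfac with h' | h'
  · rcases mul_eq_zero.1 h' with h'' | h''
    · rcases mul_eq_zero.1 h'' with h3 | h3
      · rw [sub_eq_zero] at h3; rw [h3]; exact hc
      · have hz : z = -c := eq_neg_of_add_eq_zero_left h3
        rw [hz]; exact K.neg_mem hc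
    · have hz : z = I * c := sub_eq_zero.1 h''
      rw [hz]; exact K.mul_mem hI hc
  · have hz : z = -(I * c) := eq_neg_of_add_eq_zero_left h'
    rw [hz]; exact K.neg_mem (K.mul_mem hI hc)

open Complex in
/-- For `θ(z) = −(z⁸ + 14z⁴ + 1)³/(108 z⁴ (z⁴ − 1)⁴)` and a rational number
`a ∉ {0, 1, −1}`, every `z ∈ ℂ` satisfying `θ(z) = θ(a)` lies in `ℚ(i)`. -/
theorem stmt13 (a : ℚ) (ha : a ∉ ({0, 1, -1} : Set ℚ)) (z : ℂ)
    (hz : z ^ 4 * (z ^ 4 - 1) ≠ 0)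
    (h : -(z ^ 8 + 14 * z ^ 4 + 1) ^ 3 / (108 * z ^ 4 * (z ^ 4 - 1) ^ 4) =
      -((a : ℂ) ^ 8 + 14 * (a : ℂ) ^ 4 + 1) ^ 3 /
        (108 * (a : ℂ) ^ 4 * ((a : ℂ) ^ 4 - 1) ^ 4)) :
    z ∈ IntermediateField.adjoin ℚ ({I} : Set ℂ) := by
  set K := IntermediateField.adjoin ℚ ({I} : Set ℂ) with hK
  have hI : I ∈ K := IntermediateField.subset_adjoin ℚ _ rfl
  simp only [Set.mem_insert_iff, Set.mem_singleton_iff, not_or] at ha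
  obtain ⟨ha0, ha1, ham1⟩ := ha
  have hA0 : (a : ℂ) ≠ 0 := by exact_mod_cast ha0
  set A : ℂ := (a : ℂ) with hA
  have hAm1 : A - 1 ≠ 0 := by
    rw [sub_ne_zero, hA]
    exact_mod_cast ha1
  have hAp1 : A + 1 ≠ 0 := by
    intro hcon
    have h2 : A = -1 := eq_neg_of_add_eq_zero_left hcon
    rw [hA] at h2
    apply ham1; exact_mod_cast h2
  have hAmI : A - I ≠ 0 := by
    intro hcon
    have := congrArg Complex.im hcon
    simp [hA] at this
  have hApI : A + I ≠ 0 := by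
    intro hcon
    have := congrArg Complex.im hcon
    simp [hA] at this
  have hAK : A ∈ K := by
    have := IntermediateField.algebraMap_mem K a
    simpa [hA, algebraMap] using this
  have hz4 : z ^ 4 ≠ 0 := fun hc => hz (by rw [hc]; ring)
  have hz41 : z ^ 4 - 1 ≠ 0 := fun hc => hz (by rw [hc]; ring)
  have hA4 : A ^ 4 ≠ 0 := pow_ne_zero _ hA0
  have hA41 : A ^ 4 - 1 ≠ 0 := by
    intro hcon
    have h1 : (A - 1) * (A + 1) * (A ^ 2 + 1) = 0 := by linear_combination hcon
    rcases mul_eq_zero.1 h1 with h' | h'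
    · rcases mul_eq_zero.1 h' with h'' | h''
      · exact hAm1 h''
      · exact hAp1 h''
    · have h2 : (A - I) * (A + I) = 0 := by
        linear_combination h' - Complex.I_sq
      rcases mul_eq_zero.1 h2 with h'' | h''
      · exact hAmI h''
      · exact hApI h''
  have hDz : (108 : ℂ) * z ^ 4 * (z ^ 4 - 1) ^ 4 ≠ 0 :=
    mul_ne_zero (mul_ne_zero (by norm_num) hz4) (pow_ne_zero _ hz41)
  have hDa : (108 : ℂ) * A ^ 4 * (A ^ 4 - 1) ^ 4 ≠ 0 :=
    mul_ne_zero (mul_ne_zero (by norm_num) hA4) (pow_ne_zero _ hA41)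
  have E := (div_eq_div_iff hDz hDa).1 h
  have key : (z ^ 4 - A ^ 4) * (A ^ 4 * z ^ 4 - 1) *
      ((A - 1) ^ 4 * z ^ 4 - (A + 1) ^ 4) * ((A + 1) ^ 4 * z ^ 4 - (A - 1) ^ 4) *
      ((A ^ 2 + 1) ^ 4 * z ^ 8 -
        2 * (A ^ 8 - 28 * A ^ 6 + 70 * A ^ 4 - 28 * A ^ 2 + 1) * z ^ 4 +
        (A ^ 2 + 1) ^ 4) = 0 := by
    linear_combination (-(1 : ℂ) / 108) * E
  rcases mul_eq_zero.1 key with h1 | hG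
  · rcases mul_eq_zero.1 h1 with h2 | h5
    · rcases mul_eq_zero.1 h2 with h3 | h4
      · rcases mul_eq_zero.1 h3 with he | he
        · exact quartic_mem_adjoin_I hAK (sub_eq_zero.1 he)
        · -- A^4 z^4 = 1 : z = i^k / a
          refine quartic_mem_adjoin_I (c := A⁻¹) (K.inv_mem hAK) ?_
          rw [inv_pow]
          field_simp
          linear_combination he
      · -- (A-1)^4 z^4 = (A+1)^4
        refine quartic_mem_adjoin_I (c := (A + 1) / (A - 1))
          (K.div_mem (K.add_mem hAK K.one_mem) (K.sub_mem hAK K.one_mem)) ?_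
        rw [div_pow, eq_div_iff (pow_ne_zero 4 hAm1)]
        linear_combination h4
    · refine quartic_mem_adjoin_I (c := (A - 1) / (A + 1))
        (K.div_mem (K.sub_mem hAK K.one_mem) (K.add_mem hAK K.one_mem)) ?_
      rw [div_pow, eq_div_iff (pow_ne_zero 4 hAp1)]
      linear_combination h5
  · -- G = 0 : split into the two Gaussian factors
    have hsplit : ((A - I) ^ 4 * z ^ 4 - (A + I) ^ 4) *
        ((A + I) ^ 4 * z ^ 4 - (A - I) ^ 4) = 0 := by
      linear_combination hG +
        ((-1) + I ^ 2 + (-1) * I ^ 4 + I ^ 6 + (-4) * A ^ 2 + 4 * A ^ 2 * I ^ 2 +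
          (-4) * A ^ 2 * I ^ 4 + (-6) * A ^ 4 + 6 * A ^ 4 * I ^ 2 + (-4) * A ^ 6 +
          2 * z ^ 4 + (-2) * z ^ 4 * I ^ 2 + 2 * z ^ 4 * I ^ 4 + (-2) * z ^ 4 * I ^ 6 +
          (-56) * z ^ 4 * A ^ 2 + 56 * z ^ 4 * A ^ 2 * I ^ 2 +
          (-56) * z ^ 4 * A ^ 2 * I ^ 4 + 140 * z ^ 4 * A ^ 4 +
          (-140) * z ^ 4 * A ^ 4 * I ^ 2 + (-56) * z ^ 4 * A ^ 6 + (-1) * z ^ 8 +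
          z ^ 8 * I ^ 2 + (-1) * z ^ 8 * I ^ 4 + z ^ 8 * I ^ 6 + (-4) * z ^ 8 * A ^ 2 +
          4 * z ^ 8 * A ^ 2 * I ^ 2 + (-4) * z ^ 8 * A ^ 2 * I ^ 4 +
          (-6) * z ^ 8 * A ^ 4 + 6 * z ^ 8 * A ^ 4 * I ^ 2 + (-4) * z ^ 8 * A ^ 6) *
          Complex.I_sq
    rcases mul_eq_zero.1 hsplit with h6 | h7
    · refine quartic_mem_adjoin_I (c := (A + I) / (A - I))
        (K.div_mem (K.add_mem hAK hI) (K.sub_mem hAK hI)) ?_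
      rw [div_pow, eq_div_iff (pow_ne_zero 4 hAmI)]
      linear_combination h6
    · refine quartic_mem_adjoin_I (c := (A - I) / (A + I))
        (K.div_mem (K.sub_mem hAK hI) (K.add_mem hAK hI)) ?_
      rw [div_pow, eq_div_iff (pow_ne_zero 4 hApI)]
      linear_combination h7
end

section
/- There exist a number field k and an infinite set S ⊆ k such that for every t ∈ S, all complex roots of the equation 3z⁴ − 4z³ = t lie in k. -/
/-!
Write `f z = 3z⁴ - 4z³` and `a(m) = 4(m² + m + 1) / (3(m + 1)(m² + 1))`. Then
`f a(m) = f (m a(m))`, and the discriminant of the quadratic carrying the other two roots of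
`f z = f a(m)` is a square times `-(3m² + 2m + 3)`: given `w² = -(3m² + 2m + 3)` those roots are
`2m(±w - (m + 1)) / (3(m + 1)(m² + 1))`. Taking `w = y √-3` with `3y² = 3m² + 2m + 3`, all four
roots lie in `ℚ(√-3)` whenever `(m, y)` is a rational point of this conic. The conic has the point
`(0, 1)`, and the lines `y = 1 + s m` through it give the rational points
`m = 2(3s - 1) / (3(1 - s²))`. For `s ≥ 3` the value `f a(m(s))` is strictly decreasing in `s`,
so these values form an infinite set.
-/

open Set

section Algebra

variable {K : Type*} [Field K]

def quartic (z : K) : K := 3 * z ^ 4 - 4 * z ^ 3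

def rootA (m : K) : K := 4 * (m ^ 2 + m + 1) / (3 * (m + 1) * (m ^ 2 + 1))

def otherRoot (m w : K) : K := 2 * m * (w - (m + 1)) / (3 * (m + 1) * (m ^ 2 + 1))

def conicParam (s : K) : K := 2 * (3 * s - 1) / (3 * (1 - s ^ 2))

variable [CharZero K]

theorem three_mul_sq_one_add_mul_conicParam {s : K} (hs : 1 - s ^ 2 ≠ 0) :
    3 * (1 + s * conicParam s) ^ 2 = 3 * conicParam s ^ 2 + 2 * conicParam s + 3 := by
  unfold conicParam
  field_simp
  ring

theorem quartic_sub_quartic_rootA {m w : K} (hm1 : m + 1 ≠ 0) (hm2 : m ^ 2 + 1 ≠ 0)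
    (hw : w ^ 2 = -(3 * m ^ 2 + 2 * m + 3)) (z : K) :
    quartic z - quartic (rootA m) =
      3 * (z - rootA m) * (z - m * rootA m) * (z - otherRoot m w) * (z - otherRoot m (-w)) := by
  -- the product of the last two factors involves `w` only through `w²`
  linear_combination (norm := skip)
    3 * (z - rootA m) * (z - m * rootA m) * (2 * m / (3 * (m + 1) * (m ^ 2 + 1))) ^ 2 * hw
  unfold quartic rootA otherRoot
  field_simp
  ring

theorem quartic_eq_quartic_rootA_iff {m w : K} (hm1 : m + 1 ≠ 0) (hm2 : m ^ 2 + 1 ≠ 0)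
    (hw : w ^ 2 = -(3 * m ^ 2 + 2 * m + 3)) {z : K} :
    quartic z = quartic (rootA m) ↔
      z = rootA m ∨ z = m * rootA m ∨ z = otherRoot m w ∨ z = otherRoot m (-w) := by
  rw [← sub_eq_zero, quartic_sub_quartic_rootA hm1 hm2 hw]
  simp only [mul_eq_zero, sub_eq_zero, OfNat.ofNat_ne_zero, false_or, or_assoc]

theorem mem_of_quartic_eq_quartic_rootA {S : Type*} [SetLike S K] [SubfieldClass S K] (k : S)
    {m w z : K} (hm : m ∈ k) (hw : w ∈ k) (hm1 : m + 1 ≠ 0) (hm2 : m ^ 2 + 1 ≠ 0)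
    (hw2 : w ^ 2 = -(3 * m ^ 2 + 2 * m + 3)) (hz : quartic z = quartic (rootA m)) : z ∈ k := by
  rcases (quartic_eq_quartic_rootA_iff hm1 hm2 hw2).1 hz with rfl | rfl | rfl | rfl <;>
    simp only [rootA, otherRoot] <;> aesop

end Algebra

section Order

variable {K : Type*} [Field K] [LinearOrder K] [IsStrictOrderedRing K]

theorem strictMonoOn_quartic : StrictMonoOn (quartic : K → K) (Ici 1) := by
  intro x hx y hy hxy
  simp only [mem_Ici] at hx hy
  have hfactor : quartic y - quartic x =
      (y - x) * (3 * (y ^ 3 + y ^ 2 * x + y * x ^ 2 + x ^ 3) - 4 * (y ^ 2 + y * x + x ^ 2)) := by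
    unfold quartic; ring
  have hpos : 0 < 3 * (y ^ 3 + y ^ 2 * x + y * x ^ 2 + x ^ 3) - 4 * (y ^ 2 + y * x + x ^ 2) := by
    nlinarith [mul_le_mul hx hy zero_le_one (by linarith), mul_pos (sub_pos.2 hxy) (sub_pos.2 hxy)]
  rw [← sub_pos, hfactor]
  exact mul_pos (sub_pos.2 hxy) hpos

theorem one_lt_rootA {m : K} (hm : m ∈ Ioo (-1) 0) : 1 < rootA m := by
  obtain ⟨hm1, hm0⟩ := hm
  have hD : 0 < 3 * (m + 1) * (m ^ 2 + 1) := by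
    have : 0 < m + 1 := by linarith
    positivity
  rw [rootA, one_lt_div hD]
  nlinarith [pow_pos (neg_pos.2 hm0) 3, sq_nonneg (m + 1)]

theorem strictAntiOn_rootA : StrictAntiOn (rootA : K → K) (Ioo (-1) 0) := by
  rintro m₁ ⟨h₁, h₁'⟩ m₂ ⟨h₂, h₂'⟩ hlt
  have hD₁ : 0 < 3 * (m₁ + 1) * (m₁ ^ 2 + 1) := by
    have : 0 < m₁ + 1 := by linarith
    positivity
  have hD₂ : 0 < 3 * (m₂ + 1) * (m₂ ^ 2 + 1) := by
    have : 0 < m₂ + 1 := by linarith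
    positivity
  have hu : 0 < m₁ * m₂ := mul_pos_of_neg_of_neg h₁' h₂'
  have hQ : 0 < (m₁ * m₂) ^ 2 + m₁ * m₂ * (m₁ + m₂ + 1) + m₁ ^ 2 + m₂ ^ 2 := by
    nlinarith [mul_pos hu (show 0 < m₁ * m₂ + m₁ + m₂ + 3 by linarith),
      sq_nonneg (m₁ - m₂)]
  rw [rootA, rootA, div_lt_div_iff₀ hD₂ hD₁]
  nlinarith [mul_pos (sub_pos.2 hlt) hQ]

theorem conicParam_mem_Ioo {s : K} (hs : 3 ≤ s) : conicParam s ∈ Ioo (-1) 0 := by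
  have hd : 3 * (1 - s ^ 2) < 0 := by nlinarith
  constructor
  · rw [conicParam, lt_div_iff_of_neg hd]
    nlinarith
  · exact div_neg_of_pos_of_neg (by linarith) hd

theorem strictMonoOn_conicParam : StrictMonoOn (conicParam : K → K) (Ioi 1) := by
  intro s₁ (h₁ : 1 < s₁) s₂ (h₂ : 1 < s₂) hlt
  have hd₁ : 0 < s₁ ^ 2 - 1 := by nlinarith
  have hd₂ : 0 < s₂ ^ 2 - 1 := by nlinarith
  have hdiff : conicParam s₂ - conicParam s₁ =
      2 * (s₂ - s₁) * (3 * s₁ * s₂ - s₁ - s₂ + 3) /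
        (3 * (s₁ ^ 2 - 1) * (s₂ ^ 2 - 1)) := by
    have : 1 - s₁ ^ 2 ≠ 0 := by linarith
    have : 1 - s₂ ^ 2 ≠ 0 := by linarith
    unfold conicParam
    field_simp
    ring
  have hnum : 0 < 3 * s₁ * s₂ - s₁ - s₂ + 3 := by
    nlinarith [mul_pos (sub_pos.2 h₁) (sub_pos.2 h₂)]
  rw [← sub_pos, hdiff]
  have := sub_pos.2 hlt
  positivity

theorem strictAntiOn_quartic_rootA_conicParam :
    StrictAntiOn (quartic ∘ rootA ∘ conicParam : K → K) (Ici 3) := by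
  have hmaps : MapsTo conicParam (Ici (3 : K)) (Ioo (-1) 0) := fun s hs => conicParam_mem_Ioo hs
  refine strictMonoOn_quartic.comp_strictAntiOn
    (strictAntiOn_rootA.comp_strictMonoOn (strictMonoOn_conicParam.mono ?_) hmaps)
    (fun s hs => (one_lt_rootA (hmaps hs)).le)
  exact fun s (hs : 3 ≤ s) => show 1 < s by linarith

end Order

/-- There exist a number field `k` (a subfield of `ℂ` finite over `ℚ`) and an infinite set
`S ⊆ k` such that for every `t ∈ S` all complex roots of `3z⁴ − 4z³ = t` lie in `k`. -/
theorem stmt17 :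
    ∃ k : IntermediateField ℚ ℂ, FiniteDimensional ℚ ↥k ∧
      ∃ S : Set ℂ, S.Infinite ∧ S ⊆ (k : Set ℂ) ∧
        ∀ t ∈ S, ∀ z : ℂ, 3 * z ^ 4 - 4 * z ^ 3 = t → z ∈ k := by
  obtain ⟨c, hc⟩ := IsAlgClosed.exists_pow_nat_eq (-3 : ℂ) two_pos
  have hc_int : IsIntegral ℚ c := IsIntegral.of_pow two_pos <| by
    rw [hc]; simpa using isIntegral_algebraMap (R := ℚ) (A := ℂ) (x := -3)
  let k := IntermediateField.adjoin ℚ {c}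
  have hck : c ∈ k := IntermediateField.mem_adjoin_simple_self ℚ c
  let value : ℚ → ℚ := quartic ∘ rootA ∘ conicParam
  have hvalue (s : ℚ) : (value s : ℂ) = quartic (rootA (conicParam (s : ℂ))) := by
    simp [value, quartic, rootA, conicParam]
  refine ⟨k, IntermediateField.adjoin.finiteDimensional hc_int,
    (fun s : ℚ => (value s : ℂ)) '' Ici 3,
    (Ici_infinite 3).image
      (Rat.cast_injective.comp_injOn strictAntiOn_quartic_rootA_conicParam.injOn),
    fun _ ⟨s, _, hs⟩ => hs ▸ SubfieldClass.ratCast_mem k _, ?_⟩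
  rintro _ ⟨s, hs, rfl⟩ z hz
  obtain ⟨hm₁, -⟩ := conicParam_mem_Ioo (K := ℚ) hs
  have hs₁ : 1 - (s : ℂ) ^ 2 ≠ 0 := by
    exact_mod_cast (show 1 - s ^ 2 ≠ 0 by nlinarith [mem_Ici.1 hs])
  have hm : conicParam (s : ℂ) = (conicParam s : ℚ) := by simp [conicParam]
  have hmk : conicParam (s : ℂ) ∈ k := hm ▸ SubfieldClass.ratCast_mem k _
  refine mem_of_quartic_eq_quartic_rootA k hmk
    (mul_mem (add_mem (one_mem k) (mul_mem (SubfieldClass.ratCast_mem k s) hmk)) hck)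
    (hm ▸ by exact_mod_cast (show conicParam s + 1 ≠ 0 by linarith))
    (hm ▸ by exact_mod_cast (show conicParam s ^ 2 + 1 ≠ 0 by positivity))
    ?_ (hvalue s ▸ hz)
  linear_combination
    (1 + s * conicParam (s : ℂ)) ^ 2 * hc - three_mul_sq_one_add_mul_conicParam hs₁
end

section
/- Let A ∈ ℂ(z) be a rational function, and suppose there exist infinitely many algebraic numbers α such that α is not a pole of A and A(α) is algebraic. Then A is defined over ℚ̄, i.e., A can be written as a ratio of two polynomials all of whose coefficients are algebraic numbers. -/
open Polynomial in
/-- Auxiliary: a nontrivial pair of polynomials over the algebraic numbers interpolating the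
values `b i` at the points `a i`. -/
theorem stmt18_aux (dp dq : ℕ) (K : Type) [Field K]
    (a b : Fin (dp + dq + 1) → K) :
    ∃ P₀ Q₀ : K[X], ¬(P₀ = 0 ∧ Q₀ = 0) ∧ P₀.degree < (dp + 1 : ℕ) ∧ Q₀.degree < (dq + 1 : ℕ) ∧
      ∀ i, P₀.eval (a i) = b i * Q₀.eval (a i) := by
  set V := (degreeLT K (dp + 1)) × (degreeLT K (dq + 1))
  haveI : FiniteDimensional K (degreeLT K (dp + 1)) :=
    Module.Finite.equiv (degreeLTEquiv K (dp + 1)).symm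
  haveI : FiniteDimensional K (degreeLT K (dq + 1)) :=
    Module.Finite.equiv (degreeLTEquiv K (dq + 1)).symm
  set f : V →ₗ[K] (Fin (dp + dq + 1) → K) := LinearMap.pi fun i =>
    ((leval (a i)).comp ((degreeLT K (dp + 1)).subtype.comp (LinearMap.fst K _ _)))
      - (b i) • ((leval (a i)).comp ((degreeLT K (dq + 1)).subtype.comp (LinearMap.snd K _ _)))
  have hker : LinearMap.ker f ≠ ⊥ := by
    intro hk
    have hinj : Function.Injective f := LinearMap.ker_eq_bot.mp hk
    have h1 := LinearMap.finrank_le_finrank_of_injective hinj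
    have h2 : Module.finrank K V = dp + dq + 2 := by
      rw [Module.finrank_prod, (degreeLTEquiv K (dp + 1)).finrank_eq,
        (degreeLTEquiv K (dq + 1)).finrank_eq, Module.finrank_fin_fun, Module.finrank_fin_fun]
      omega
    have h3 : Module.finrank K (Fin (dp + dq + 1) → K) = dp + dq + 1 := Module.finrank_fin_fun K
    omega
  obtain ⟨v, hv, hv0⟩ := Submodule.ne_bot_iff _ |>.mp hker
  obtain ⟨⟨P₀, hP₀⟩, ⟨Q₀, hQ₀⟩⟩ := v
  refine ⟨P₀, Q₀, ?_, Polynomial.mem_degreeLT.mp hP₀, Polynomial.mem_degreeLT.mp hQ₀, ?_⟩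
  · rintro ⟨rfl, rfl⟩
    exact hv0 (by ext <;> rfl)
  · intro i
    have h5 : P₀.eval (a i) - b i * Q₀.eval (a i) = 0 :=
      congrFun (LinearMap.mem_ker.mp hv) i
    exact sub_eq_zero.mp h5

/-- If a rational function `A ∈ ℂ(z)` takes algebraic values at infinitely many algebraic
points (which are not poles of `A`), then `A` is defined over `ℚ̄`: it is a ratio of two
polynomials all of whose coefficients are algebraic numbers. -/
theorem stmt18 (A : RatFunc ℂ)
    (h : {α : ℂ | IsAlgebraic ℚ α ∧ Polynomial.eval α A.denom ≠ 0 ∧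
      IsAlgebraic ℚ (RatFunc.eval (RingHom.id ℂ) α A)}.Infinite) :
    ∃ P Q : Polynomial ℂ, Q ≠ 0 ∧
      (∀ n : ℕ, IsAlgebraic ℚ (P.coeff n)) ∧ (∀ n : ℕ, IsAlgebraic ℚ (Q.coeff n)) ∧
      A = algebraMap (Polynomial ℂ) (RatFunc ℂ) P / algebraMap (Polynomial ℂ) (RatFunc ℂ) Q := by
  classical
  set K := algebraicClosure ℚ ℂ with hK
  set p := A.num with hp
  set q := A.denom with hq
  set dp := p.natDegree
  set dq := q.natDegree
  set m := dp + dq + 1 with hm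
  -- pick m distinct points in the set
  let e := Set.Infinite.natEmbedding _ h
  set a : Fin m → ℂ := fun i => (e i).1 with ha
  have ha_inj : Function.Injective a :=
    Subtype.val_injective.comp (e.injective.comp Fin.val_injective)
  have ha_mem : ∀ i, (a i) ∈ {α : ℂ | IsAlgebraic ℚ α ∧ Polynomial.eval α A.denom ≠ 0 ∧
      IsAlgebraic ℚ (RatFunc.eval (RingHom.id ℂ) α A)} := fun i => (e i).2
  have ha_alg : ∀ i, IsAlgebraic ℚ (a i) := fun i => (ha_mem i).1
  have ha_den : ∀ i, Polynomial.eval (a i) q ≠ 0 := fun i => (ha_mem i).2.1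
  set b : Fin m → ℂ := fun i => RatFunc.eval (RingHom.id ℂ) (a i) A with hb
  have hb_alg : ∀ i, IsAlgebraic ℚ (b i) := fun i => (ha_mem i).2.2
  have hb_eq : ∀ i, b i * Polynomial.eval (a i) q = Polynomial.eval (a i) p := by
    intro i
    have : b i = Polynomial.eval (a i) p / Polynomial.eval (a i) q := by
      rfl
    rw [this, div_mul_cancel₀ _ (ha_den i)]
  -- points and values in K
  set abar : Fin m → K := fun i => ⟨a i, mem_algebraicClosure_iff.mpr (ha_alg i)⟩
  set bbar : Fin m → K := fun i => ⟨b i, mem_algebraicClosure_iff.mpr (hb_alg i)⟩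
  obtain ⟨P₀, Q₀, hnz, hPdeg, hQdeg, heq⟩ := stmt18_aux dp dq K abar bbar
  set φ : K →+* ℂ := algebraMap K ℂ with hφ
  have hφ_inj : Function.Injective φ := (algebraMap K ℂ).injective
  set P : Polynomial ℂ := P₀.map φ with hP
  set Q : Polynomial ℂ := Q₀.map φ with hQ
  have hcoeff : ∀ (R : Polynomial K) (n : ℕ), IsAlgebraic ℚ ((R.map φ).coeff n) := by
    intro R n
    rw [Polynomial.coeff_map]
    exact mem_algebraicClosure_iff.mp (R.coeff n).2
  have heval : ∀ (R : Polynomial K) (i : Fin m),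
      (R.map φ).eval (a i) = φ (R.eval (abar i)) := by
    intro R i
    have : a i = φ (abar i) := rfl
    rw [this, Polynomial.eval_map, Polynomial.eval₂_at_apply]
  have heq' : ∀ i, P.eval (a i) = b i * Q.eval (a i) := by
    intro i
    have : b i = φ (bbar i) := rfl
    rw [hP, hQ, heval, heval, this, ← map_mul, heq i]
  -- the polynomial identity
  have hPq : P * q = p * Q := by
    have hF : P * q - p * Q = 0 := by
      apply Polynomial.eq_zero_of_natDegree_lt_card_of_eval_eq_zero _ ha_inj
      · intro i
        simp only [Polynomial.eval_sub, Polynomial.eval_mul]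
        rw [heq' i, ← hb_eq i]
        ring
      · have hPd : P.natDegree ≤ dp := by
          rw [hP]
          have h0 : (P₀.map φ).natDegree ≤ P₀.natDegree := Polynomial.natDegree_map_le
          refine le_trans h0 ?_
          by_cases hP₀0 : P₀ = 0
          · simp [hP₀0]
          · have := (Polynomial.natDegree_lt_iff_degree_lt hP₀0).mpr hPdeg
            omega
        have hQd : Q.natDegree ≤ dq := by
          rw [hQ]
          have h0 : (Q₀.map φ).natDegree ≤ Q₀.natDegree := Polynomial.natDegree_map_le
          refine le_trans h0 ?_
          by_cases hQ₀0 : Q₀ = 0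
          · simp [hQ₀0]
          · have := (Polynomial.natDegree_lt_iff_degree_lt hQ₀0).mpr hQdeg
            omega
        have h1 : (P * q).natDegree ≤ dp + dq :=
          le_trans (Polynomial.natDegree_mul_le) (by omega)
        have h2 : (p * Q).natDegree ≤ dp + dq :=
          le_trans (Polynomial.natDegree_mul_le) (by omega)
        have := Polynomial.natDegree_sub_le (P * q) (p * Q)
        simp only [Fintype.card_fin]
        omega
    exact sub_eq_zero.mp hF
  have hQ0 : Q₀ ≠ 0 := by
    intro hQ0
    apply hnz
    refine ⟨?_, hQ0⟩
    have : P * q = 0 := by rw [hPq, hQ, hQ0]; simp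
    have hP0 : P = 0 := by
      rcases mul_eq_zero.mp this with h' | h'
      · exact h'
      · exact absurd h' (RatFunc.denom_ne_zero A)
    exact Polynomial.map_injective φ hφ_inj (by simpa [hP] using hP0)
  have hQne : Q ≠ 0 := fun h' =>
    hQ0 (Polynomial.map_injective φ hφ_inj (by simpa [hQ] using h'))
  refine ⟨P, Q, hQne, fun n => hcoeff P₀ n, fun n => hcoeff Q₀ n, ?_⟩
  rw [← RatFunc.num_div_denom A]
  rw [div_eq_div_iff (RatFunc.algebraMap_ne_zero (RatFunc.denom_ne_zero A))
    (RatFunc.algebraMap_ne_zero hQne), ← map_mul, ← map_mul]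
  congr 1
  exact hPq.symm
end
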